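/- arXiv:1304.0488 — 3 statements merged into one kernel-verified Lean document; each statement's English description precedes it below -/
import Mathlib

section
/- Let ε ∈ (0,1) and let Ψ : ℕ → [0,1) satisfy Ψ(n) ≤ (φ(n)/n)^{2/ε} for all n. Define ψ₁(n) = Ψ(n) and ψ₂(n) = Ψ(n)^ε · n/φ(n), and θ(n) = ψ₁(n)·ψ₂(n) = Ψ(n)^{1+ε} · n/φ(n). Then for every n with θ(n) ≠ 0 one has max(θ(n)/ψ₁(n), θ(n)/ψ₂(n)) ≤ θ(n)^{ε/(2(1+ε))}. -/
/-!
Write `a = Ψ n`, `r = n / φ(n) ≥ 1`, so that `θ n = a^(1+ε) r` and the two quotients are `a^ε r` and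
`a`. The hypothesis on `Ψ` says exactly `a^(ε/2) r ≤ 1`, hence `a^ε r ≤ a^(ε/2)`, and `a ≤ a^(ε/2)`
since `a ≤ 1`. Finally `θ n ^ (ε/(2(1+ε))) = a^(ε/2) r^(ε/(2(1+ε))) ≥ a^(ε/2)`.
-/

open Real

lemma rpow_div_two_le_rpow_mul {ε a r : ℝ} (hε : 0 ≤ ε) (ha : 0 ≤ a) (hr : 1 ≤ r) :
    a ^ (ε / 2) ≤ (a ^ (1 + ε) * r) ^ (ε / (2 * (1 + ε))) := by
  have hexp : (1 + ε) * (ε / (2 * (1 + ε))) = ε / 2 := by field_simp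
  rw [mul_rpow (rpow_nonneg ha _) (by linarith), ← rpow_mul ha, hexp]
  exact le_mul_of_one_le_right (rpow_nonneg ha _) (one_le_rpow hr (by positivity))

lemma max_div_le_rpow_div_two {ε a r : ℝ} (hε : ε ≤ 2) (ha₀ : 0 < a) (ha₁ : a ≤ 1) (hr : 0 < r)
    (hkey : a ^ (ε / 2) ≤ r⁻¹) :
    max (a ^ (1 + ε) * r / a) (a ^ (1 + ε) * r / (a ^ ε * r)) ≤ a ^ (ε / 2) := by
  have hsplit : a ^ (1 + ε) = a * (a ^ (ε / 2) * a ^ (ε / 2)) := by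
    rw [← rpow_add ha₀, add_halves, rpow_add ha₀, rpow_one]
  apply max_le
  · calc a ^ (1 + ε) * r / a = a ^ (ε / 2) * (a ^ (ε / 2) * r) := by
          rw [hsplit]; field_simp
      _ ≤ a ^ (ε / 2) * (r⁻¹ * r) := by gcongr
      _ = a ^ (ε / 2) := by rw [inv_mul_cancel₀ hr.ne', mul_one]
  · calc a ^ (1 + ε) * r / (a ^ ε * r) = a := by
          rw [hsplit, ← rpow_add ha₀, add_halves]
          field_simp
      _ ≤ a ^ (ε / 2) := self_le_rpow_of_le_one ha₀.le ha₁ (by linarith)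

lemma one_le_div_totient {n : ℕ} (hn : n ≠ 0) : 1 ≤ (n : ℝ) / n.totient := by
  have hφ : (0 : ℝ) < n.totient := by exact_mod_cast Nat.totient_pos.mpr (Nat.pos_of_ne_zero hn)
  rw [one_le_div hφ]
  exact_mod_cast Nat.totient_le n

theorem key_max_inequality (ε : ℝ) (hε : ε ∈ Set.Ioo (0:ℝ) 1)
    (Ψ : ℕ → ℝ) (hΨ : ∀ n, 0 ≤ Ψ n ∧ Ψ n < 1)
    (hbd : ∀ n, Ψ n ≤ ((Nat.totient n : ℝ) / n) ^ (2 / ε))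
    (θ : ℕ → ℝ) (hθ : ∀ n, θ n = Ψ n ^ (1 + ε) * n / Nat.totient n) :
    ∀ n, θ n ≠ 0 →
      max (θ n / Ψ n) (θ n / (Ψ n ^ ε * n / Nat.totient n)) ≤ θ n ^ (ε / (2 * (1 + ε))) := by
  obtain ⟨hε₀, hε₁⟩ := hε
  intro n hθn
  obtain ⟨ha₀, ha₁⟩ := hΨ n
  rw [hθ, mul_div_assoc] at hθn ⊢
  rw [mul_div_assoc (Ψ n ^ ε)]
  have hn : n ≠ 0 := by
    rintro rfl
    simp at hθn
  have ha : 0 < Ψ n := by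
    refine ha₀.lt_of_ne' fun h => hθn ?_
    rw [h, zero_rpow (by linarith), zero_mul]
  have hr := one_le_div_totient hn
  have hkey : Ψ n ^ (ε / 2) ≤ ((n : ℝ) / n.totient)⁻¹ := by
    rw [inv_div, ← le_rpow_inv_iff_of_pos ha₀ (by positivity) (by positivity), inv_div]
    exact hbd n
  exact (max_div_le_rpow_div_two (by linarith) ha ha₁.le (by linarith) hkey).trans
    (rpow_div_two_le_rpow_mul hε₀.le ha₀ hr)
end

section
/- There exists a function ψ : ℕ → [0,∞) (with ψ(n) ≥ 1 for infinitely many n) and ε > 0 such that Σ_n ψ(n)^{1+ε}·φ(n)/n = ∞ but Σ_n ψ(n)·φ(n)/n < ∞; consequently the Lebesgue measure of W(ψ) is 0 by the first Borel–Cantelli lemma. -/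
/-! Since `∑ 1/p` diverges, `φ(m!)/m! = ∏_{p ≤ m} (1 - 1/p) ≤ exp (-∑_{p ≤ m} 1/p) → 0`,
so there are `N₀ < N₁ < ⋯` with `φ(N_k)/N_k ≤ (k+1)⁻⁴`. Put `ψ(N_k) = N_k / ((k+1)² φ(N_k))`
and `ψ = 0` elsewhere: `ψ(n) φ(n)/n` is `(k+1)⁻²` at `n = N_k`, hence summable, while
`ψ(N_k)² φ(N_k)/N_k ≥ 1`, so `ε = 1` works. As `ψ(n) ≤ n`, the points of `[0,1]` with
`|xn - m| < ψ(n)` for some `m` coprime to `n` lie in at most `4 φ(n)` intervals of length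
`2 ψ(n)/n`, and the first Borel–Cantelli lemma shows that `W(ψ)` is null. -/

open MeasureTheory Filter

/-- The Duffin–Schaeffer set `W(ψ)`: points of `[0,1]` approximable with
coprime pairs `(n,m)` for infinitely many `n`. -/
def DSset (ψ : ℕ → ℝ) : Set ℝ :=
  {x | x ∈ Set.Icc (0:ℝ) 1 ∧
    {n : ℕ | ∃ m : ℤ, Int.gcd (n : ℤ) m = 1 ∧ |x * n - m| < ψ n}.Infinite}

open Topology Finset
open scoped Nat

theorem Nat.totient_div_le_exp_neg_sum_primeFactors (n : ℕ) :
    (φ n / n : ℝ) ≤ Real.exp (-∑ p ∈ n.primeFactors, (1 / p : ℝ)) := by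
  rcases eq_or_ne n 0 with rfl | hn
  · simp only [Nat.totient_zero, Nat.cast_zero, div_zero]
    positivity
  have euler : (φ n / n : ℝ) = ∏ p ∈ n.primeFactors, (1 - (p : ℝ)⁻¹) := by
    have := congrArg (Rat.cast (K := ℝ)) (Nat.totient_eq_mul_prod_factors n)
    push_cast at this
    rw [this, mul_div_cancel_left₀ _ (by exact_mod_cast hn)]
  rw [euler, ← Finset.sum_neg_distrib, Real.exp_sum]
  refine Finset.prod_le_prod (fun p hp => ?_) (fun p _ => ?_)
  · have : (1 : ℝ) ≤ p := by exact_mod_cast (Nat.pos_of_mem_primeFactors hp)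
    simpa using inv_le_one_of_one_le₀ this
  · simpa [sub_eq_neg_add] using Real.add_one_le_exp (-(p : ℝ)⁻¹)

theorem Nat.primeFactors_factorial (m : ℕ) :
    (m !).primeFactors = {p ∈ range (m + 1) | p.Prime} := by
  ext p
  simp only [Nat.mem_primeFactors, mem_filter, mem_range, Nat.lt_succ_iff]
  constructor
  · rintro ⟨hp, hdvd, -⟩
    exact ⟨(hp.dvd_factorial).mp hdvd, hp⟩
  · rintro ⟨hle, hp⟩
    exact ⟨hp, (hp.dvd_factorial).mpr hle, Nat.factorial_ne_zero m⟩

theorem tendsto_sum_one_div_primes_atTop :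
    Tendsto (fun m => ∑ p ∈ range m with p.Prime, (1 / p : ℝ)) atTop atTop := by
  have := (not_summable_iff_tendsto_nat_atTop_of_nonneg
    (fun n => Set.indicator_nonneg (fun n _ => by positivity) n)).mp
    not_summable_one_div_on_primes
  simpa only [Finset.sum_filter, Set.indicator_apply, Set.mem_ofPred_eq] using this

theorem tendsto_totient_div_factorial_nhds_zero :
    Tendsto (fun m : ℕ => (φ m ! / m ! : ℝ)) atTop (𝓝 0) := by
  refine squeeze_zero (fun m => by positivity)
    (fun m => Nat.totient_div_le_exp_neg_sum_primeFactors m !) ?_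
  simp only [Nat.primeFactors_factorial]
  exact Real.tendsto_exp_atBot.comp <| tendsto_neg_atTop_atBot.comp <|
    tendsto_sum_one_div_primes_atTop.comp (tendsto_add_atTop_nat 1)

theorem frequently_totient_div_lt {c : ℝ} (hc : 0 < c) :
    ∃ᶠ n : ℕ in atTop, (φ n / n : ℝ) < c :=
  factorial_tendsto_atTop.frequently
    (tendsto_totient_div_factorial_nhds_zero.eventually_lt_const hc).frequently

theorem exists_strictMono_totient_div_lt (c : ℕ → ℝ) (hc : ∀ k, 0 < c k) :
    ∃ N : ℕ → ℕ, StrictMono N ∧ ∀ k, 0 < N k ∧ (φ (N k) / N k : ℝ) < c k :=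
  extraction_forall_of_frequently fun k =>
    ((frequently_totient_div_lt (hc k)).and_eventually (eventually_gt_atTop 0)).mono
      fun _ h => h.symm

def coprimeApproxSet (n : ℕ) (r : ℝ) : Set ℝ :=
  {x | x ∈ Set.Icc (0:ℝ) 1 ∧ ∃ m : ℤ, Int.gcd (n : ℤ) m = 1 ∧ |x * n - m| < r}

theorem card_filter_coprime_Ico_neg_le (n : ℕ) :
    #{m ∈ Ico (-(n : ℤ)) (2 * n) | Int.gcd n m = 1} ≤ 4 * φ n := by
  rcases eq_or_ne n 0 with rfl | hn
  · simp
  calc #{m ∈ Ico (-(n : ℤ)) (2 * n) | Int.gcd n m = 1}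
      ≤ #{k ∈ Ico 0 (0 + 3 * n) | n.Coprime k} := by
        refine card_le_card_of_injOn (fun m => (m + n).toNat) (fun m hm => ?_) ?_
        · simp only [coe_filter, mem_Ico, Set.mem_ofPred_eq] at hm ⊢
          refine ⟨by omega, ?_⟩
          rw [Nat.Coprime, ← Int.gcd_natCast_natCast, Int.toNat_of_nonneg (by omega),
            Int.gcd_add_self_right, hm.2]
        · intro m₁ hm₁ m₂ hm₂ h
          simp only [coe_filter, mem_Ico, Set.mem_ofPred_eq] at hm₁ hm₂ h
          omega
    _ ≤ φ n * (3 * n / n + 1) := Nat.Ico_filter_coprime_le 0 _ hn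
    _ = 4 * φ n := by rw [Nat.mul_div_cancel _ (Nat.pos_of_ne_zero hn)]; ring

theorem coprimeApproxSet_subset {n : ℕ} {r : ℝ} (hr : r ≤ n) :
    coprimeApproxSet n r ⊆ ⋃ m ∈ {m ∈ Ico (-(n : ℤ)) (2 * n) | Int.gcd n m = 1},
      Set.Ioo ((m - r) / n) ((m + r) / n) := by
  rintro x ⟨⟨hx₀, hx₁⟩, m, hm, hxm⟩
  rw [abs_lt] at hxm
  have hmem : m ∈ {m ∈ Ico (-(n : ℤ)) (2 * n) | Int.gcd n m = 1} := by
    simp only [mem_filter, mem_Ico]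
    refine ⟨⟨?_, ?_⟩, hm⟩
    · have : (-(n : ℤ) : ℝ) < m := by push_cast; nlinarith
      exact_mod_cast this.le
    · have : (m : ℝ) < (2 * n : ℤ) := by push_cast; nlinarith
      exact_mod_cast this
  have hn : (0 : ℝ) < n := by
    simp only [mem_filter, mem_Ico] at hmem
    exact_mod_cast (show (0 : ℤ) < n by omega)
  refine Set.mem_biUnion hmem ⟨?_, ?_⟩
  · rw [div_lt_iff₀ hn]; linarith
  · rw [lt_div_iff₀ hn]; linarith

theorem volume_coprimeApproxSet_le {n : ℕ} {r : ℝ} (hr : r ≤ n) :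
    volume (coprimeApproxSet n r) ≤ ENNReal.ofReal (8 * (r * (φ n / n))) := by
  set B := {m ∈ Ico (-(n : ℤ)) (2 * n) | Int.gcd n m = 1}
  calc volume (coprimeApproxSet n r)
      ≤ ∑ m ∈ B, volume (Set.Ioo ((m - r) / n) (((m : ℝ) + r) / n)) :=
        (measure_mono (coprimeApproxSet_subset hr)).trans (measure_biUnion_finset_le _ _)
    _ = #B * ENNReal.ofReal (2 * r / n) := by
        rw [← nsmul_eq_mul, ← sum_const]
        refine sum_congr rfl fun m _ => ?_
        rw [Real.volume_Ioo]
        congr 1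
        ring
    _ ≤ (4 * φ n : ℕ) * ENNReal.ofReal (2 * r / n) := by
        gcongr
        exact card_filter_coprime_Ico_neg_le n
    _ = ENNReal.ofReal (8 * (r * (φ n / n))) := by
        rw [← ENNReal.ofReal_natCast, ← ENNReal.ofReal_mul (by positivity)]
        congr 1
        push_cast
        ring

theorem DSset_subset_limsup (ψ : ℕ → ℝ) :
    DSset ψ ⊆ limsup (fun n => coprimeApproxSet n (ψ n)) atTop := by
  rintro x ⟨hx, hinf⟩
  rw [mem_limsup_iff_frequently_mem]
  exact (Nat.frequently_atTop_iff_infinite.mpr hinf).mono fun n hn => ⟨hx, hn⟩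

theorem volume_DSset_eq_zero_of_summable {ψ : ℕ → ℝ} (hψ : ∀ n, ψ n ≤ n)
    (hsum : Summable fun n : ℕ => ψ n * (φ n / n : ℝ)) : volume (DSset ψ) = 0 := by
  refine measure_mono_null (DSset_subset_limsup ψ) (measure_limsup_atTop_eq_zero ?_)
  refine ne_top_of_le_ne_top ?_ (ENNReal.tsum_le_tsum fun n => volume_coprimeApproxSet_le (hψ n))
  exact ENNReal.tsum_coe_ne_top_iff_summable.mpr (hsum.mul_left 8).toNNReal

noncomputable def spikeFunction (N : ℕ → ℕ) : ℕ → ℝ :=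
  Function.extend N (fun k => (N k : ℝ) / ((k + 1) ^ 2 * φ (N k))) 0

section Spikes

variable {N : ℕ → ℕ}

theorem spikeFunction_apply (hN : Function.Injective N) (k : ℕ) :
    spikeFunction N (N k) = (N k : ℝ) / ((k + 1) ^ 2 * φ (N k)) :=
  hN.extend_apply _ _ _

theorem spikeFunction_of_notMem_range {n : ℕ} (hn : n ∉ Set.range N) : spikeFunction N n = 0 :=
  Function.extend_apply' _ _ _ fun ⟨k, hk⟩ => hn ⟨k, hk⟩

theorem spikeFunction_nonneg (n : ℕ) : 0 ≤ spikeFunction N n := by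
  classical
  rw [spikeFunction, Function.extend_def]
  split_ifs
  · positivity
  · exact le_rfl

theorem spikeFunction_mul_totient_div (hN : Function.Injective N) {k : ℕ} (hk : 0 < N k) :
    spikeFunction N (N k) * (φ (N k) / N k : ℝ) = 1 / (k + 1) ^ 2 := by
  have : (φ (N k) : ℝ) ≠ 0 := by exact_mod_cast (Nat.totient_pos.mpr hk).ne'
  rw [spikeFunction_apply hN]
  field_simp

theorem spikeFunction_le_self (hN : Function.Injective N) (hpos : ∀ k, 0 < N k) (n : ℕ) :
    spikeFunction N n ≤ n := by
  by_cases hn : n ∈ Set.range N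
  · obtain ⟨k, rfl⟩ := hn
    have hφ : (1 : ℝ) ≤ φ (N k) := by exact_mod_cast Nat.totient_pos.mpr (hpos k)
    have hk : (1 : ℝ) ≤ (k + 1) ^ 2 := one_le_pow₀ (by linarith [k.cast_nonneg (α := ℝ)])
    rw [spikeFunction_apply hN]
    exact div_le_self (Nat.cast_nonneg _) (one_le_mul_of_one_le_of_one_le hk hφ)
  · rw [spikeFunction_of_notMem_range hn]
    exact Nat.cast_nonneg n

theorem sq_le_spikeFunction (hN : Function.Injective N) {k : ℕ} (hk : 0 < N k)
    (hsmall : (φ (N k) / N k : ℝ) ≤ 1 / (k + 1) ^ 4) :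
    ((k : ℝ) + 1) ^ 2 ≤ spikeFunction N (N k) := by
  have ha : (0 : ℝ) < φ (N k) / N k := by
    have := Nat.totient_pos.mpr hk
    positivity
  calc ((k : ℝ) + 1) ^ 2 = 1 / ((k : ℝ) + 1) ^ 2 / (1 / (k + 1) ^ 4) := by field_simp
    _ ≤ 1 / ((k : ℝ) + 1) ^ 2 / (φ (N k) / N k) :=
      div_le_div_of_nonneg_left (by positivity) ha hsmall
    _ = spikeFunction N (N k) := by
      rw [← spikeFunction_mul_totient_div hN hk, mul_div_cancel_right₀ _ ha.ne']

theorem summable_spikeFunction_mul_totient_div (hN : Function.Injective N)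
    (hpos : ∀ k, 0 < N k) : Summable fun n : ℕ => spikeFunction N n * (φ n / n : ℝ) := by
  refine (hN.summable_iff fun n hn => by rw [spikeFunction_of_notMem_range hn, zero_mul]).mp ?_
  simp only [Function.comp_def, spikeFunction_mul_totient_div hN (hpos _)]
  exact_mod_cast (summable_nat_add_iff 1).mpr (Real.summable_one_div_nat_pow.mpr one_lt_two)

theorem not_summable_spikeFunction_sq_mul_totient_div (hN : Function.Injective N)
    (hpos : ∀ k, 0 < N k) (hsmall : ∀ k, (φ (N k) / N k : ℝ) ≤ 1 / (k + 1) ^ 4) :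
    ¬ Summable fun n : ℕ => spikeFunction N n ^ 2 * (φ n / n : ℝ) := by
  intro h
  have hterm (k : ℕ) : 1 ≤ spikeFunction N (N k) ^ 2 * (φ (N k) / N k : ℝ) := by
    rw [sq, mul_assoc, spikeFunction_mul_totient_div hN (hpos k), mul_one_div,
      le_div_iff₀ (by positivity), one_mul]
    exact sq_le_spikeFunction hN (hpos k) (hsmall k)
  obtain ⟨k, hk⟩ :=
    ((h.comp_injective hN).tendsto_atTop_zero.eventually_lt_const one_pos).exists
  exact (hterm k).not_gt hk

end Spikes

theorem counterexample_unbounded_psi :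
    ∃ ψ : ℕ → ℝ, (∀ n, 0 ≤ ψ n) ∧ {n : ℕ | 1 ≤ ψ n}.Infinite ∧
      ∃ ε > (0:ℝ),
        ¬ Summable (fun n : ℕ => ψ n ^ (1 + ε) * (Nat.totient n / n : ℝ)) ∧
        Summable (fun n : ℕ => ψ n * (Nat.totient n / n : ℝ)) ∧
        volume (DSset ψ) = 0 := by
  obtain ⟨N, hN, hNk⟩ :=
    exists_strictMono_totient_div_lt (fun k => 1 / ((k : ℝ) + 1) ^ 4) fun k => by positivity
  have hpos k := (hNk k).1
  have hsmall k := (hNk k).2.le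
  have hsummable := summable_spikeFunction_mul_totient_div hN.injective hpos
  refine ⟨spikeFunction N, spikeFunction_nonneg, ?_, 1, one_pos, ?_, hsummable,
    volume_DSset_eq_zero_of_summable (spikeFunction_le_self hN.injective hpos) hsummable⟩
  · refine (Set.infinite_range_of_injective hN.injective).mono ?_
    rintro _ ⟨k, rfl⟩
    exact (one_le_pow₀ (le_add_of_nonneg_left k.cast_nonneg)).trans
      (sq_le_spikeFunction hN.injective (hpos k) (hsmall k))
  · rw [one_add_one_eq_two]
    simpa only [Real.rpow_two] using
      not_summable_spikeFunction_sq_mul_totient_div hN.injective hpos hsmall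
end

section
/- The set {φ(n)/n : n ∈ ℕ} is dense in the interval (0,1), where φ is Euler's totient function. -/
/-!
Over a finite set `S` of primes, `n = ∏ S` has `φ(n)/n = ∏_{p ∈ S} (1 - 1/p)`. Running through the
primes `p ≥ P` in increasing order, these partial products start at `1`, decrease by factors at
least `1 - 1/P` and tend to `0` because `∑ 1/p` diverges. So the first partial product below a
given `x ∈ (0, 1)` lies within `x / P` of `x`.
-/

open Finset Filter Topology

lemma Nat.totient_prod_div_prod_of_prime {s : Finset ℕ} (hs : ∀ p ∈ s, p.Prime) :
    (Nat.totient (∏ p ∈ s, p) : ℝ) / ∏ p ∈ s, (p : ℝ) = ∏ p ∈ s, (1 - (p : ℝ)⁻¹) := by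
  have hpos : 0 < ∏ p ∈ s, p := prod_pos fun p hp => (hs p hp).pos
  have key := Nat.totient_mul_prod_primeFactors (∏ p ∈ s, p)
  rw [Nat.primeFactors_prod hs, mul_comm, Nat.mul_left_cancel_iff hpos] at key
  rw [key, Nat.cast_prod, ← prod_div_distrib]
  refine prod_congr rfl fun p hp => ?_
  have hp0 : (p : ℝ) ≠ 0 := by exact_mod_cast (hs p hp).ne_zero
  rw [Nat.cast_pred (hs p hp).pos, sub_div, div_self hp0, one_div]

lemma prod_one_sub_le_exp_neg_sum {ι : Type*} (s : Finset ι) {a : ι → ℝ} (h : ∀ i ∈ s, a i ≤ 1) :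
    ∏ i ∈ s, (1 - a i) ≤ Real.exp (-∑ i ∈ s, a i) := by
  rw [← sum_neg_distrib, Real.exp_sum]
  exact prod_le_prod (fun i hi => sub_nonneg.2 (h i hi)) fun i _ => Real.one_sub_le_exp_neg _

lemma tendsto_prod_range_one_sub_of_not_summable {a : ℕ → ℝ} (h0 : ∀ n, 0 ≤ a n)
    (h1 : ∀ n, a n ≤ 1) (h : ¬Summable a) :
    Tendsto (fun N => ∏ i ∈ range N, (1 - a i)) atTop (𝓝 0) := by
  have hsum := (not_summable_iff_tendsto_nat_atTop_of_nonneg h0).1 h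
  have hexp : Tendsto (fun N => Real.exp (-∑ i ∈ range N, a i)) atTop (𝓝 0) :=
    Real.tendsto_exp_atBot.comp (tendsto_neg_atTop_atBot.comp hsum)
  exact tendsto_of_tendsto_of_tendsto_of_le_of_le tendsto_const_nhds hexp
    (fun N => prod_nonneg fun i _ => sub_nonneg.2 (h1 i))
    (fun N => prod_one_sub_le_exp_neg_sum _ fun i _ => h1 i)

lemma not_summable_inv_on_primes_ge (P : ℕ) :
    ¬Summable ({p : ℕ | p.Prime ∧ P ≤ p}.indicator fun n : ℕ => (n : ℝ)⁻¹) := by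
  refine fun h => not_summable_one_div_on_primes <| (summable_congr_atTop ?_).1 h
  filter_upwards [eventually_ge_atTop P] with n hn
  simp [Set.indicator_apply, hn]

lemma exists_mul_le_lt_of_mul_le_succ {f : ℕ → ℝ} {c x : ℝ} (hc : 0 ≤ c)
    (hstep : ∀ n, c * f n ≤ f (n + 1)) (h0 : x ≤ f 0) (hlt : ∃ N, f N < x) :
    ∃ N, c * x ≤ f N ∧ f N < x := by
  classical
  obtain ⟨M, hM⟩ : ∃ M, Nat.find hlt = M + 1 :=
    Nat.exists_eq_succ_of_ne_zero fun h => (Nat.find_spec hlt).not_ge (h ▸ h0)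
  have hxM : x ≤ f M := not_lt.1 (Nat.find_min hlt (by omega))
  refine ⟨M + 1, (mul_le_mul_of_nonneg_left hxM hc).trans (hstep M), ?_⟩
  exact hM ▸ Nat.find_spec hlt

lemma exists_totient_div_mem_Ico {x : ℝ} (hx0 : 0 < x) (hx1 : x ≤ 1) {P : ℕ} (hP : 0 < P) :
    ∃ n : ℕ, 0 < n ∧ (Nat.totient n : ℝ) / n ∈ Set.Ico ((1 - (P : ℝ)⁻¹) * x) x := by
  set a := {p : ℕ | p.Prime ∧ P ≤ p}.indicator fun n : ℕ => (n : ℝ)⁻¹ with ha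
  have hP' : (0 : ℝ) < P := Nat.cast_pos.2 hP
  have ha0 : ∀ n, 0 ≤ a n := fun n => Set.indicator_nonneg (fun n _ => by positivity) n
  have haP : ∀ n, a n ≤ (P : ℝ)⁻¹ := by
    intro n
    by_cases hn : n ∈ {p : ℕ | p.Prime ∧ P ≤ p}
    · rw [ha, Set.indicator_of_mem hn]
      exact inv_anti₀ hP' (Nat.cast_le.2 hn.2)
    · rw [ha, Set.indicator_of_notMem hn]
      positivity
  have hP1 : (P : ℝ)⁻¹ ≤ 1 := inv_le_one_of_one_le₀ (Nat.one_le_cast.2 hP)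
  have ha1 : ∀ n, a n ≤ 1 := fun n => (haP n).trans hP1
  have hstep : ∀ N,
      (1 - (P : ℝ)⁻¹) * ∏ i ∈ range N, (1 - a i) ≤ ∏ i ∈ range (N + 1), (1 - a i) := by
    intro N
    rw [prod_range_succ, mul_comm]
    exact mul_le_mul_of_nonneg_left (by linarith [haP N])
      (prod_nonneg fun i _ => sub_nonneg.2 (ha1 i))
  obtain ⟨N, hlo, hhi⟩ := exists_mul_le_lt_of_mul_le_succ (sub_nonneg.2 hP1) hstep
    (by simpa using hx1)
    ((tendsto_prod_range_one_sub_of_not_summable ha0 ha1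
      (not_summable_inv_on_primes_ge P)).eventually (gt_mem_nhds hx0)).exists
  set S := (range N).filter fun p => p.Prime ∧ P ≤ p
  have hS : ∀ p ∈ S, p.Prime := fun p hp => (mem_filter.1 hp).2.1
  have hprod : ∏ i ∈ range N, (1 - a i) = ∏ p ∈ S, (1 - (p : ℝ)⁻¹) := by
    rw [prod_filter]
    exact prod_congr rfl fun i _ => by by_cases hi : i.Prime ∧ P ≤ i <;> simp [a, hi]
  refine ⟨∏ p ∈ S, p, prod_pos fun p hp => (hS p hp).pos, ?_⟩
  rw [Nat.cast_prod, Nat.totient_prod_div_prod_of_prime hS, ← hprod]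
  exact ⟨hlo, hhi⟩

theorem totient_ratio_dense :
    Set.Ioo (0:ℝ) 1 ⊆ closure {x : ℝ | ∃ n : ℕ, 0 < n ∧ (Nat.totient n : ℝ) / n = x} := by
  rintro x ⟨hx0, hx1⟩
  refine Metric.mem_closure_iff.2 fun ε hε => ?_
  obtain ⟨P, hP⟩ := exists_nat_gt ε⁻¹
  have hP0 : (0 : ℝ) < P := (inv_pos.2 hε).trans hP
  have hPε : (P : ℝ)⁻¹ < ε := inv_lt_of_inv_lt₀ hε hP
  obtain ⟨n, hn, hlo, hhi⟩ := exists_totient_div_mem_Ico hx0 hx1.le (Nat.cast_pos.1 hP0)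
  refine ⟨_, ⟨n, hn, rfl⟩, ?_⟩
  rw [Real.dist_eq, abs_sub_lt_iff]
  constructor <;> nlinarith [inv_pos.2 hP0]
end
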